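/- Let K be a field and let (aₙ)ₙ≥₁ be a sequence of formal power series in K[[t]] such that each aₙ has zero constant term and a₁ = aₙⁿ for every integer n ≥ 1. Then aₙ = 0 for all n ≥ 1. (Consequently, there is no arc Spec(K[[t]]) → V({x₁ − xₙⁿ}ₙ) sending the closed point to the origin and the generic point to a point other than the origin.) -/

import Mathlib

open PowerSeries

theorem PowerSeries.eq_zero_of_forall_X_pow_dvd {R : Type*} [Semiring R] {φ : R⟦X⟧}
    (h : ∀ n, (X : R⟦X⟧) ^ n ∣ φ) : φ = 0 := by
  ext m
  simpa using X_pow_dvd_iff.mp (h (m + 1)) m m.lt_succ_self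

/-- The counterexample of the introduction: let `K` be a field and `(aₙ)ₙ≥₁` a sequence of
formal power series in `K[[t]]` with zero constant term such that `a₁ = aₙⁿ` for every
`n ≥ 1`. Then `aₙ = 0` for all `n ≥ 1`. (Hence no arc `Spec K[[t]] → V({x₁ - xₙⁿ}ₙ)` sends
the closed point to the origin and the generic point to a point other than the origin.) -/
theorem powerSeries_eq_zero_of_forall_pow_eq
    (K : Type u) [Field K] (a : ℕ → PowerSeries K)
    (hconst : ∀ n, 1 ≤ n → PowerSeries.constantCoeff (a n) = 0)
    (hpow : ∀ n, 1 ≤ n → a 1 = (a n) ^ n) :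
    ∀ n, 1 ≤ n → a n = 0 := by
  have ha₁ : a 1 = 0 := by
    refine eq_zero_of_forall_X_pow_dvd fun m ↦ ?_
    have hm : 1 ≤ m + 1 := Nat.le_add_left 1 m
    calc (X : K⟦X⟧) ^ m ∣ X ^ (m + 1) := pow_dvd_pow X m.le_succ
      _ ∣ a (m + 1) ^ (m + 1) := pow_dvd_pow_of_dvd (X_dvd_iff.mpr (hconst _ hm)) _
      _ = a 1 := (hpow _ hm).symm
  intro n hn
  exact pow_eq_zero_iff (by omega) |>.mp (ha₁ ▸ hpow n hn).symm
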